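/- Under the linear separability assumption (rows of A of ℓ2-norm ≤ 1, unit maximal margin classifier w* with margin γ > 0), suppose the combined regret of the smooth Perceptron dynamics satisfies R^w + R^p ≤ 4 log n, with Σ_{t=1}^T α_t = T(T+1)/2. Then the output w̄_T satisfies min_{p∈Δ^n} p^T A w̄_T ≥ γ²/2 - 8 log n / T². In particular w̄_T has non-negative margin whenever T ≥ 4√(log n)/γ. -/
import Mathlib

open Pointwise


/-- `m(w) = min_{p ∈ Δⁿ} pᵀ A w - ½‖w‖₂²`. -/
noncomputable def mval {n d : ℕ} (A : Matrix (Fin n) (Fin d) ℝ) (w : Fin d → ℝ) : ℝ :=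
  sInf ((fun p : Fin n → ℝ => ∑ i, p i * A.mulVec w i) '' stdSimplex ℝ (Fin n))
    - (1 / 2) * ∑ j, (w j) ^ 2

/-- Convergence of the smooth Perceptron: under separability with unit margin-`γ`
classifier `w*`, if the total regret is at most `4 log n` and the duality-gap bound
holds with `∑ α t = T(T+1)/2`, then the output `w̄_T` has margin at least
`γ²/2 - 8 log n / T²`; in particular it is non-negative once `T ≥ 4 √(log n) / γ`. -/
theorem smooth_perceptron_convergence {n d T : ℕ} [NeZero n] (hT : 1 ≤ T)
    (A : Matrix (Fin n) (Fin d) ℝ)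
    (hA : ∀ i, Real.sqrt (∑ j, (A i j) ^ 2) ≤ 1)
    (wstar : Fin d → ℝ) (γ : ℝ) (hγ : 0 < γ)
    (hnorm : Real.sqrt (∑ j, (wstar j) ^ 2) = 1)
    (hmargin : sInf ((fun p : Fin n → ℝ => ∑ i, p i * A.mulVec wstar i) ''
      stdSimplex ℝ (Fin n)) = γ)
    (wbar : Fin d → ℝ)
    (Rtot : ℝ) (hRtot : Rtot ≤ 4 * Real.log n)
    (hgap : mval A (γ • wstar) - mval A wbar ≤ ((T : ℝ) * (T + 1) / 2)⁻¹ * Rtot) :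
    γ ^ 2 / 2 - 8 * Real.log n / (T : ℝ) ^ 2 ≤
        sInf ((fun p : Fin n → ℝ => ∑ i, p i * A.mulVec wbar i) '' stdSimplex ℝ (Fin n))
      ∧ ((4 * Real.sqrt (Real.log n) / γ ≤ (T : ℝ)) →
          0 ≤ sInf ((fun p : Fin n → ℝ => ∑ i, p i * A.mulVec wbar i) ''
            stdSimplex ℝ (Fin n))) := by
  have hn1 : (1:ℝ) ≤ n := by
    have := Nat.one_le_iff_ne_zero.mpr (NeZero.ne n); exact_mod_cast this
  have hlogn : 0 ≤ Real.log n := Real.log_nonneg hn1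
  have hT0 : (0:ℝ) < T := by exact_mod_cast hT
  -- sum of squares of wstar = 1
  have hsq0 : 0 ≤ ∑ j, (wstar j) ^ 2 := Finset.sum_nonneg fun j _ => sq_nonneg _
  have hsum : ∑ j, (wstar j) ^ 2 = 1 := by
    have h := Real.sq_sqrt hsq0
    rw [hnorm] at h; linarith
  -- image set scaling
  have himg : ((fun p : Fin n → ℝ => ∑ i, p i * A.mulVec (γ • wstar) i) ''
      stdSimplex ℝ (Fin n))
      = γ • ((fun p : Fin n → ℝ => ∑ i, p i * A.mulVec wstar i) '' stdSimplex ℝ (Fin n)) := by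
    rw [← Set.image_smul, Set.image_image]
    apply Set.image_congr
    intro p _
    simp only [Matrix.mulVec_smul, Pi.smul_apply, smul_eq_mul, Finset.mul_sum]
    exact Finset.sum_congr rfl fun i _ => by ring
  have hmv : mval A (γ • wstar) = γ ^ 2 / 2 := by
    unfold mval
    rw [himg, Real.sInf_smul_of_nonneg hγ.le, hmargin]
    have : ∑ j, ((γ • wstar) j) ^ 2 = γ ^ 2 := by
      simp only [Pi.smul_apply, smul_eq_mul, mul_pow, ← Finset.mul_sum, hsum, mul_one]
    rw [this]
    simp [smul_eq_mul]; ring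
  set S := sInf ((fun p : Fin n → ℝ => ∑ i, p i * A.mulVec wbar i) '' stdSimplex ℝ (Fin n))
    with hS
  have hmvb : mval A wbar ≤ S := by
    unfold mval
    have : 0 ≤ ∑ j, (wbar j) ^ 2 := Finset.sum_nonneg fun j _ => sq_nonneg _
    rw [← hS]; nlinarith
  -- bound on the regret term
  set u : ℝ := ((T : ℝ) * (T + 1) / 2)⁻¹ with hu
  have hupos : 0 < u := by
    rw [hu]; positivity
  have huprod : u * ((T : ℝ) * (T + 1) / 2) = 1 := by
    rw [hu]; field_simp
  have hterm : u * Rtot ≤ 8 * Real.log n / (T : ℝ) ^ 2 := by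
    rw [le_div_iff₀ (by positivity : (0:ℝ) < (T:ℝ)^2)]
    nlinarith [mul_nonneg (mul_nonneg hupos.le (sq_nonneg (T:ℝ)))
        (sub_nonneg.mpr hRtot),
      mul_nonneg hupos.le hT0.le,
      mul_nonneg hlogn (mul_nonneg hupos.le hT0.le)]
  have hmain : γ ^ 2 / 2 - 8 * Real.log n / (T : ℝ) ^ 2 ≤ S := by
    rw [hmv] at hgap
    have := hgap
    linarith
  refine ⟨hmain, fun hcond => ?_⟩
  have h1 : 4 * Real.sqrt (Real.log n) ≤ (T : ℝ) * γ := by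
    rw [div_le_iff₀ hγ] at hcond; linarith
  have h2 : Real.log n ≤ ((T : ℝ) * γ) ^ 2 / 16 := by
    have hs : Real.sqrt (Real.log n) ≤ (T : ℝ) * γ / 4 := by linarith
    have := Real.sq_sqrt hlogn
    nlinarith [Real.sqrt_nonneg (Real.log n)]
  have h3 : 8 * Real.log n / (T : ℝ) ^ 2 ≤ γ ^ 2 / 2 := by
    rw [div_le_iff₀ (by positivity : (0:ℝ) < (T:ℝ)^2)]
    nlinarith
  linarith
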